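/- arXiv:math/0601603 — 3 statements merged into one kernel-verified Lean document; each statement's English description precedes it below -/
import Mathlib

section
/- Let E₁ and E₂ be coalgebras in a coabelian monoidal category M, let e : E₁ → E₂ be a coalgebra homomorphism, let (X₁, i_{X₁}) and (Y₁, i_{Y₁}) be subobjects of E₁ and (X₂, i_{X₂}), (Y₂, i_{Y₂}) be subobjects of E₂, and let x : X₁ → X₂ and y : Y₁ → Y₂ be morphisms satisfying e ∘ i_{X₁} = i_{X₂} ∘ x and e ∘ i_{Y₁} = i_{Y₂} ∘ y. Then there exists a unique morphism x ∧_e y : X₁ ∧_{E₁} Y₁ → X₂ ∧_{E₂} Y₂ such that i_{X₂∧Y₂}^{E₂} ∘ (x ∧_e y) = e ∘ i_{X₁∧Y₁}^{E₁}. -/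
open CategoryTheory CategoryTheory.Limits MonoidalCategory

/-- Let `E₁`, `E₂` be coalgebras (comonoid objects) in a coabelian monoidal
category `M` (an abelian monoidal category whose tensor functors are additive and left exact),
let `e : E₁ ⟶ E₂` be a coalgebra homomorphism, let `iX₁ : X₁ ↪ E₁`, `iY₁ : Y₁ ↪ E₁`,
`iX₂ : X₂ ↪ E₂`, `iY₂ : Y₂ ↪ E₂` be subobjects and `x : X₁ ⟶ X₂`, `y : Y₁ ⟶ Y₂` morphisms
with `e ∘ iX₁ = iX₂ ∘ x` and `e ∘ iY₁ = iY₂ ∘ y`.  Then there is a unique morphism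
`x ∧_e y : X₁ ∧_{E₁} Y₁ ⟶ X₂ ∧_{E₂} Y₂` compatible with the inclusions of the wedge products,
where `X ∧_E Y := ker ((p_X ⊗ p_Y) ∘ Δ_E)`. -/
theorem wedge_map_exists_unique
    {M : Type*} [Category M] [MonoidalCategory M] [Abelian M]
    [∀ X : M, (tensorLeft X).Additive] [∀ X : M, (tensorRight X).Additive]
    [∀ X : M, PreservesFiniteLimits (tensorLeft X)]
    [∀ X : M, PreservesFiniteLimits (tensorRight X)]
    (E₁ E₂ : Comon M) (e : E₁ ⟶ E₂)
    {X₁ Y₁ : M} (iX₁ : X₁ ⟶ E₁.X) (iY₁ : Y₁ ⟶ E₁.X) [Mono iX₁] [Mono iY₁]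
    {X₂ Y₂ : M} (iX₂ : X₂ ⟶ E₂.X) (iY₂ : Y₂ ⟶ E₂.X) [Mono iX₂] [Mono iY₂]
    (x : X₁ ⟶ X₂) (y : Y₁ ⟶ Y₂)
    (hx : iX₁ ≫ e.hom = x ≫ iX₂) (hy : iY₁ ≫ e.hom = y ≫ iY₂) :
    ∃! w : kernel (ComonObj.comul (X := E₁.X) ≫ (cokernel.π iX₁ ⊗ₘ cokernel.π iY₁)) ⟶
        kernel (ComonObj.comul (X := E₂.X) ≫ (cokernel.π iX₂ ⊗ₘ cokernel.π iY₂)),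
      w ≫ kernel.ι (ComonObj.comul (X := E₂.X) ≫ (cokernel.π iX₂ ⊗ₘ cokernel.π iY₂)) =
        kernel.ι (ComonObj.comul (X := E₁.X) ≫ (cokernel.π iX₁ ⊗ₘ cokernel.π iY₁)) ≫ e.hom := by

  have hX0 : iX₁ ≫ e.hom ≫ cokernel.π iX₂ = 0 := by
    rw [← Category.assoc, hx, Category.assoc, cokernel.condition, comp_zero]
  have hY0 : iY₁ ≫ e.hom ≫ cokernel.π iY₂ = 0 := by
    rw [← Category.assoc, hy, Category.assoc, cokernel.condition, comp_zero]
  have hu : cokernel.π iX₁ ≫ cokernel.desc iX₁ (e.hom ≫ cokernel.π iX₂) hX0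
      = e.hom ≫ cokernel.π iX₂ := cokernel.π_desc _ _ _
  have hv : cokernel.π iY₁ ≫ cokernel.desc iY₁ (e.hom ≫ cokernel.π iY₂) hY0
      = e.hom ≫ cokernel.π iY₂ := cokernel.π_desc _ _ _
  have key : (kernel.ι (ComonObj.comul (X := E₁.X) ≫ (cokernel.π iX₁ ⊗ₘ cokernel.π iY₁)) ≫ e.hom) ≫
      (ComonObj.comul (X := E₂.X) ≫ (cokernel.π iX₂ ⊗ₘ cokernel.π iY₂)) = 0 := by
    have h1 : e.hom ≫ ComonObj.comul (X := E₂.X) ≫ (cokernel.π iX₂ ⊗ₘ cokernel.π iY₂)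
        = (ComonObj.comul (X := E₁.X) ≫ (cokernel.π iX₁ ⊗ₘ cokernel.π iY₁)) ≫
          (cokernel.desc iX₁ (e.hom ≫ cokernel.π iX₂) hX0 ⊗ₘ
           cokernel.desc iY₁ (e.hom ≫ cokernel.π iY₂) hY0) := by
      rw [← Category.assoc, IsComonHom.hom_comul e.hom, Category.assoc, Category.assoc,
        MonoidalCategory.tensorHom_comp_tensorHom]
      simp only [MonoidalCategory.tensorHom_comp_tensorHom, cokernel.π_desc]
    rw [Category.assoc, h1, ← Category.assoc, kernel.condition, zero_comp]
  refine ⟨kernel.lift _ (kernel.ι _ ≫ e.hom) key, kernel.lift_ι _ _ _, fun w' hw' => ?_⟩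
  apply (cancel_mono (kernel.ι (ComonObj.comul (X := E₂.X) ≫ (cokernel.π iX₂ ⊗ₘ cokernel.π iY₂)))).1
  rw [hw', kernel.lift_ι]
end

section
/- Let δ : D → E be a monomorphism which is a morphism of coalgebras in a coabelian monoidal category M. Then, for any i ≤ j in ℕ, there is a unique morphism ξ_i^j : D^{∧_E^i} → D^{∧_E^j} such that δ_j ∘ ξ_i^j = δ_i; moreover each ξ_i^j is a coalgebra homomorphism and ((D^{∧_E^i})_{i∈ℕ}, (ξ_i^j)_{i≤j}) is a direct system in M. -/
open CategoryTheory CategoryTheory.Limits MonoidalCategory ZeroObject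

universe v u

variable {M : Type u} [Category.{v} M] [MonoidalCategory M] [Abelian M]

/-- The `n`-th tensor power `X^{⊗n}` of an object, with `X^{⊗0} = 𝟙`, `X^{⊗1} = X` and
`X^{⊗(n+1)} = X^{⊗n} ⊗ X` for `n ≥ 1`. -/
def tpow (X : M) : ℕ → M
  | 0 => 𝟙_ M
  | 1 => X
  | (n + 2) => tpow X (n + 1) ⊗ X

/-- The `n`-th tensor power `f^{⊗n}` of a morphism. -/
def tpowHom {X Y : M} (f : X ⟶ Y) : (n : ℕ) → (tpow X n ⟶ tpow Y n)
  | 0 => 𝟙 (𝟙_ M)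
  | 1 => f
  | (n + 2) => tpowHom f (n + 1) ⊗ₘ f

/-- The `n`-th iterated comultiplication `Δ_E^n : E ⟶ E^{⊗(n+1)}` of a coalgebra `E`,
with `Δ_E^0 = 𝟙 E`, `Δ_E^1 = Δ_E` and `Δ_E^n = (Δ_E^{n-1} ⊗ E) ∘ Δ_E` for `n > 1`. -/
noncomputable def iterComul (E : Comon M) : (n : ℕ) → (E.X ⟶ tpow E.X (n + 1))
  | 0 => 𝟙 E.X
  | (n + 1) => E.comon.comul ≫ (iterComul E n ⊗ₘ 𝟙 E.X)

variable {D E : Comon M} (δ : D ⟶ E)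

/-- The `n`-th iterated wedge power `D^{∧_E^n} := ker (p^{⊗n} ∘ Δ_E^{n-1})` of a subcoalgebra
`δ : D ↪ E`, where `p : E ⟶ E/D` is the cokernel of `δ`; by convention `D^{∧_E^0} = 0`. -/
noncomputable def wedgePow : ℕ → M
  | 0 => 0
  | (n + 1) => kernel (iterComul E n ≫ tpowHom (cokernel.π δ.hom) (n + 1))

/-- The canonical monomorphism `δ_n : D^{∧_E^n} ⟶ E`; by convention `δ_0 = 0`. -/
noncomputable def wedgePowι : (n : ℕ) → (wedgePow δ n ⟶ E.X)
  | 0 => 0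
  | (n + 1) => kernel.ι (iterComul E n ≫ tpowHom (cokernel.π δ.hom) (n + 1))


/-! ### Auxiliary lemmas -/

section Aux

/-- Comultiplication applied in the last tensor slot. -/
noncomputable def lastComul (E : Comon M) : (n : ℕ) → (tpow E.X (n + 1) ⟶ tpow E.X (n + 2))
  | 0 => E.comon.comul
  | (n + 1) => (tpow E.X (n + 1) ◁ E.comon.comul) ≫ (α_ (tpow E.X (n + 1)) E.X E.X).inv

omit [Abelian M] in
lemma iterComul_eq_lastComul (E : Comon M) (n : ℕ) :
    iterComul E (n + 1) = iterComul E n ≫ lastComul E n := by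
  induction n with
  | zero =>
    show E.comon.comul ≫ (𝟙 E.X ⊗ₘ 𝟙 E.X) = 𝟙 E.X ≫ E.comon.comul
    rw [id_tensorHom_id, Category.comp_id, Category.id_comp]
  | succ n ih =>
    show E.comon.comul ≫ (iterComul E (n + 1) ⊗ₘ 𝟙 E.X) = iterComul E (n + 1) ≫ lastComul E (n + 1)
    rw [tensorHom_id, lastComul]
    conv_rhs => rw [show iterComul E (n + 1) = E.comon.comul ≫ (iterComul E n ⊗ₘ 𝟙 E.X) from rfl,
      tensorHom_id]
    dsimp only [tpow]
    simp only [Category.assoc]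
    rw [← whisker_exchange_assoc, ComonObj.comul_assoc_assoc E.X,
      ← associator_naturality_left_assoc, Iso.hom_inv_id, Category.comp_id,
      ← comp_whiskerRight]
    rw [show iterComul E (n + 1) = E.comon.comul ≫ (iterComul E n ⊗ₘ 𝟙 E.X) from rfl, tensorHom_id]

variable [∀ X : M, (tensorLeft X).Additive] [∀ X : M, (tensorRight X).Additive]
  [∀ X : M, PreservesFiniteLimits (tensorLeft X)]

lemma whiskerRight_zero' {A B : M} (Y : M) : (0 : A ⟶ B) ▷ Y = 0 := by
  change (tensorRight Y).map (0 : A ⟶ B) = 0; exact (tensorRight Y).map_zero _ _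

lemma whiskerLeft_zero' {A B : M} (Y : M) : Y ◁ (0 : A ⟶ B) = 0 := by
  change (tensorLeft Y).map (0 : A ⟶ B) = 0; exact (tensorLeft Y).map_zero _ _

/-- `δ` composed with comultiplication lands in `D ⊗ E + E ⊗ D`. -/
lemma delta_comul_coker :
    δ.hom ≫ E.comon.comul ≫ (cokernel.π δ.hom ⊗ₘ cokernel.π δ.hom) = 0 := by
  rw [IsComonHom.hom_comul_assoc, tensorHom_comp_tensorHom, cokernel.condition, MonoidalCategory.tensorHom_def,
    whiskerRight_zero', zero_comp, comp_zero]

/-- Factorisation through the kernel of a whiskered cokernel projection. -/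
lemma factor_through_whiskerLeft_kernel {A B : M} (f : A ⟶ B) [Mono f] (W : M)
    {T : M} (z : T ⟶ W ⊗ B) (hz : z ≫ (W ◁ cokernel.π f) = 0) :
    ∃ z' : T ⟶ W ⊗ A, z' ≫ (W ◁ f) = z := by
  have hk := Abelian.monoIsKernelOfCokernel _ (cokernelIsCokernel f)
  have hl := isLimitForkMapOfIsLimit' (tensorLeft W) (cokernel.condition f) hk
  obtain ⟨l, hl'⟩ := KernelFork.IsLimit.lift' hl z (by simpa using hz)
  exact ⟨l, by simpa using hl'⟩

/-- The key step: vanishing against the `n`-th defect map implies vanishing against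
the `(n+1)`-st. -/
lemma iter_vanish_step [Mono δ.hom] {T : M} (x : T ⟶ E.X) (n : ℕ)
    (h : x ≫ (iterComul E n ≫ tpowHom (cokernel.π δ.hom) (n + 1)) = 0) :
    x ≫ (iterComul E (n + 1) ≫ tpowHom (cokernel.π δ.hom) (n + 2)) = 0 := by
  match n with
  | 0 =>
    have hx : x ≫ cokernel.π δ.hom = 0 := by
      have h1 : x ≫ 𝟙 E.X ≫ cokernel.π δ.hom = 0 := h
      simpa using h1
    have hfac : Abelian.monoLift δ.hom x hx ≫ δ.hom = x := Abelian.monoLift_comp _ _ _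
    rw [← hfac, Category.assoc]
    have h2 : δ.hom ≫ (iterComul E 1 ≫ tpowHom (cokernel.π δ.hom) 2) = 0 := by
      show δ.hom ≫ (E.comon.comul ≫ (𝟙 E.X ⊗ₘ 𝟙 E.X)) ≫
        (cokernel.π δ.hom ⊗ₘ cokernel.π δ.hom) = 0
      rw [id_tensorHom_id, Category.comp_id]
      exact delta_comul_coker δ
    rw [h2, comp_zero]
  | (m + 1) =>
    have e2 : tpowHom (cokernel.π δ.hom) (m + 2)
        = tpowHom (cokernel.π δ.hom) (m + 1) ⊗ₘ cokernel.π δ.hom := rfl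
    have e3 : tpowHom (cokernel.π δ.hom) (m + 3)
        = (tpowHom (cokernel.π δ.hom) (m + 1) ⊗ₘ cokernel.π δ.hom) ⊗ₘ cokernel.π δ.hom := rfl
    have h' : (x ≫ iterComul E (m + 1) ≫ (tpowHom (cokernel.π δ.hom) (m + 1) ▷ E.X)) ≫
        (tpow (cokernel δ.hom) (m + 1) ◁ cokernel.π δ.hom) = 0 := by
      have h₀ := h
      rw [e2, MonoidalCategory.tensorHom_def] at h₀
      erw [Category.assoc, Category.assoc]; exact h₀
    obtain ⟨z', hz'⟩ := factor_through_whiskerLeft_kernel δ.hom _ _ h'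
    have key : lastComul E (m + 1) ≫ tpowHom (cokernel.π δ.hom) (m + 3)
        = (tpowHom (cokernel.π δ.hom) (m + 1) ▷ E.X) ≫
          (tpow (cokernel δ.hom) (m + 1) ◁
            (E.comon.comul ≫ (cokernel.π δ.hom ⊗ₘ cokernel.π δ.hom))) ≫
          (α_ (tpow (cokernel δ.hom) (m + 1)) (cokernel δ.hom) (cokernel δ.hom)).inv := by
      rw [e3, lastComul]
      dsimp only [tpow]
      simp only [Category.assoc]
      rw [← associator_inv_naturality, tensorHom_def' (tpowHom (cokernel.π δ.hom) (m + 1))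
        (cokernel.π δ.hom ⊗ₘ cokernel.π δ.hom)]
      simp only [Category.assoc]
      rw [← MonoidalCategory.whiskerLeft_comp_assoc, whisker_exchange_assoc]
    rw [iterComul_eq_lastComul E (m + 1)]
    calc (x ≫ (iterComul E (m + 1) ≫ lastComul E (m + 1)) ≫ tpowHom (cokernel.π δ.hom) (m + 3) :
          T ⟶ (tpow (cokernel δ.hom) (m + 1) ⊗ cokernel δ.hom) ⊗ cokernel δ.hom)
        = (x ≫ iterComul E (m + 1) ≫ (tpowHom (cokernel.π δ.hom) (m + 1) ▷ E.X)) ≫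
          (tpow (cokernel δ.hom) (m + 1) ◁
            (E.comon.comul ≫ (cokernel.π δ.hom ⊗ₘ cokernel.π δ.hom))) ≫
          (α_ (tpow (cokernel δ.hom) (m + 1)) (cokernel δ.hom) (cokernel δ.hom)).inv := by
          exact (congrArg (x ≫ ·) (Category.assoc _ _ _)).trans
            ((congrArg (fun t => x ≫ iterComul E (m + 1) ≫ t) key).trans
              ((congrArg (x ≫ ·) (Category.assoc _ _ _).symm).trans (Category.assoc _ _ _).symm))
      _ = z' ≫ (tpow (cokernel δ.hom) (m + 1) ◁
            (δ.hom ≫ E.comon.comul ≫ (cokernel.π δ.hom ⊗ₘ cokernel.π δ.hom))) ≫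
          (α_ (tpow (cokernel δ.hom) (m + 1)) (cokernel δ.hom) (cokernel δ.hom)).inv := by
          rw [← hz', Category.assoc, ← MonoidalCategory.whiskerLeft_comp_assoc]
      _ = 0 := by
          rw [delta_comul_coker δ, whiskerLeft_zero', zero_comp, comp_zero]

/-- All iterated defect maps vanish on the wedge powers. -/
lemma wedgePowι_vanish [Mono δ.hom] (i j : ℕ) (hij : i ≤ j) :
    wedgePowι δ (i + 1) ≫ (iterComul E j ≫ tpowHom (cokernel.π δ.hom) (j + 1)) = 0 := by
  induction j with
  | zero =>
    obtain rfl : i = 0 := Nat.le_zero.mp hij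
    exact kernel.condition _
  | succ j ih =>
    rcases Nat.lt_or_ge i (j + 1) with hlt | hge
    · exact iter_vanish_step δ _ j (ih (Nat.lt_succ_iff.mp hlt))
    · obtain rfl : i = j + 1 := le_antisymm hij hge
      exact kernel.condition _

lemma wedgePowι_mono_s2 [Mono δ.hom] (n : ℕ) : Mono (wedgePowι δ (n + 1)) := by
  show Mono (kernel.ι _)
  infer_instance

lemma wedgePow_zero_isZero : IsZero (wedgePow δ 0) := isZero_zero M

end Aux

/-- Let `δ : D ⟶ E` be a monomorphism of coalgebras in a coabelian monoidal
category `M`.  Then for all `i ≤ j` there is a unique morphism `ξ : D^{∧_E^i} ⟶ D^{∧_E^j}` with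
`δ_j ∘ ξ = δ_i`; moreover each such `ξ` is a coalgebra homomorphism (with respect to the
coalgebra structures on the wedge powers, which are characterised by the fact that the
monomorphisms `δ_i` are coalgebra homomorphisms), and the morphisms `ξ_i^j` make
`(D^{∧_E^i})_{i ∈ ℕ}` a direct system in `M` (`ξ_i^i = 𝟙` and `ξ_j^k ∘ ξ_i^j = ξ_i^k`). -/
theorem wedgePow_directSystem
    {M : Type u} [Category.{v} M] [MonoidalCategory M] [Abelian M]
    [∀ X : M, (tensorLeft X).Additive] [∀ X : M, (tensorRight X).Additive]
    [∀ X : M, PreservesFiniteLimits (tensorLeft X)]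
    [∀ X : M, PreservesFiniteLimits (tensorRight X)]
    {D E : Comon M} (δ : D ⟶ E) [Mono δ.hom] :
    -- existence and uniqueness of `ξ_i^j`
    (∀ i j : ℕ, i ≤ j → ∃! ξ : wedgePow δ i ⟶ wedgePow δ j,
      ξ ≫ wedgePowι δ j = wedgePowι δ i) ∧
    -- each `ξ_i^j` is a coalgebra homomorphism
    (∀ i j : ℕ, i ≤ j →
      ∀ ξ : wedgePow δ i ⟶ wedgePow δ j, ξ ≫ wedgePowι δ j = wedgePowι δ i →
      ∀ (comulI : wedgePow δ i ⟶ wedgePow δ i ⊗ wedgePow δ i)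
        (counitI : wedgePow δ i ⟶ 𝟙_ M)
        (comulJ : wedgePow δ j ⟶ wedgePow δ j ⊗ wedgePow δ j)
        (counitJ : wedgePow δ j ⟶ 𝟙_ M),
        comulI ≫ (wedgePowι δ i ⊗ₘ wedgePowι δ i) = wedgePowι δ i ≫ E.comon.comul →
        counitI = wedgePowι δ i ≫ E.comon.counit →
        comulJ ≫ (wedgePowι δ j ⊗ₘ wedgePowι δ j) = wedgePowι δ j ≫ E.comon.comul →
        counitJ = wedgePowι δ j ≫ E.comon.counit →
        ξ ≫ comulJ = comulI ≫ (ξ ⊗ₘ ξ) ∧ ξ ≫ counitJ = counitI) ∧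
    -- the `ξ_i^j` make the wedge powers a direct system
    (∀ i : ℕ, ∀ ξ : wedgePow δ i ⟶ wedgePow δ i,
      ξ ≫ wedgePowι δ i = wedgePowι δ i → ξ = 𝟙 (wedgePow δ i)) ∧
    (∀ i j k : ℕ, i ≤ j → j ≤ k →
      ∀ (ξij : wedgePow δ i ⟶ wedgePow δ j) (ξjk : wedgePow δ j ⟶ wedgePow δ k)
        (ξik : wedgePow δ i ⟶ wedgePow δ k),
        ξij ≫ wedgePowι δ j = wedgePowι δ i →
        ξjk ≫ wedgePowι δ k = wedgePowι δ j →
        ξik ≫ wedgePowι δ k = wedgePowι δ i →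
        ξij ≫ ξjk = ξik) := by
  have hz : IsZero (wedgePow δ 0) := isZero_zero M
  have huniq : ∀ i j : ℕ, ∀ ξ ξ' : wedgePow δ i ⟶ wedgePow δ j,
      ξ ≫ wedgePowι δ j = ξ' ≫ wedgePowι δ j → ξ = ξ' := by
    intro i j ξ ξ' hh
    cases j with
    | zero => exact hz.eq_of_tgt ξ ξ'
    | succ n =>
      haveI := wedgePowι_mono_s2 δ n
      exact (cancel_mono (wedgePowι δ (n + 1))).mp hh
  refine ⟨?_, ?_, ?_, ?_⟩
  · -- existence and uniqueness
    intro i j hij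
    cases i with
    | zero =>
      refine ⟨0, ?_, fun y hy => huniq _ _ y 0 ?_⟩
      · show (0 : wedgePow δ 0 ⟶ wedgePow δ j) ≫ wedgePowι δ j = wedgePowι δ 0
        rw [zero_comp]; rfl
      · rw [hy, zero_comp]; rfl
    | succ n =>
      cases j with
      | zero => omega
      | succ mj =>
        have hv := wedgePowι_vanish δ n mj (Nat.succ_le_succ_iff.mp hij)
        refine ⟨kernel.lift _ (wedgePowι δ (n + 1)) hv, kernel.lift_ι _ _ _,
          fun y hy => huniq _ _ y _ ?_⟩
        rw [hy]
        exact (kernel.lift_ι _ _ _).symm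
  · -- coalgebra homomorphisms
    intro i j hij ξ hξ comulI counitI comulJ counitJ hcI hεI hcJ hεJ
    constructor
    · cases j with
      | zero =>
        obtain rfl : i = 0 := Nat.le_zero.mp hij
        exact hz.eq_of_src _ _
      | succ n =>
        haveI := wedgePowι_mono_s2 δ n
        haveI m1 : Mono (wedgePowι δ (n + 1) ▷ wedgePow δ (n + 1)) := by
          change Mono ((tensorRight _).map _); exact Functor.map_mono _ _
        haveI m2 : Mono (E.X ◁ wedgePowι δ (n + 1)) := by
          change Mono ((tensorLeft _).map _); exact Functor.map_mono _ _
        have m3 : Mono (wedgePowι δ (n + 1) ⊗ₘ wedgePowι δ (n + 1)) := by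
          rw [MonoidalCategory.tensorHom_def]; exact mono_comp _ _
        haveI := m3
        apply (cancel_mono (wedgePowι δ (n + 1) ⊗ₘ wedgePowι δ (n + 1))).mp
        rw [Category.assoc, hcJ, Category.assoc, tensorHom_comp_tensorHom, hξ, hcI,
          ← Category.assoc, hξ]
    · rw [hεI, hεJ, ← hξ, Category.assoc]
  · -- identity
    intro i ξ hξ
    apply huniq
    rw [hξ, Category.id_comp]
  · -- composition
    intro i j k hij hjk ξij ξjk ξik h1 h2 h3
    apply huniq
    rw [Category.assoc, h2, h1, h3]
end

section
/- Let δ : D → E be a monomorphism which is a morphism of coalgebras in a coabelian monoidal category M, and write D^n := D^{∧_E^n}. Then, for every n ∈ ℕ, there exists a unique morphism β_n : D^{n+1} → (D^{n+1}/D) ⊗ (D^n/D) such that ((D^{n+1}/D) ⊗ (ξ_n^{n+1}/D)) ∘ β_n = α_D^{D^{n+1}}, where ξ_n^{n+1}/D : D^n/D → D^{n+1}/D is the morphism induced on quotients by the canonical inclusion ξ_n^{n+1} : D^n → D^{n+1}. -/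
open CategoryTheory CategoryTheory.Limits MonoidalCategory ZeroObject

universe v u

variable {M : Type u} [Category.{v} M] [MonoidalCategory M] [Abelian M]

variable {D E : Comon M} (δ : D ⟶ E)

instance wedgePowι_mono (n : ℕ) : Mono (wedgePowι δ (n + 1)) := by
  show Mono (kernel.ι _); infer_instance

/-! ### Auxiliary lemmas -/

section Aux

theorem tensorLeft_map (X : M) {Y Z : M} (f : Y ⟶ Z) : (tensorLeft X).map f = X ◁ f := rfl

theorem tensorRight_map (X : M) {Y Z : M} (f : Y ⟶ Z) : (tensorRight X).map f = f ▷ X := rfl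

/-- The canonical map out of the coimage is a monomorphism. -/
theorem mono_factorThruCoimage' {C : Type*} [Category C] [Abelian C] {X Y : C} (f : X ⟶ Y) :
    Mono (Abelian.factorThruCoimage f) := by
  have h : Abelian.factorThruCoimage f =
      Abelian.coimageImageComparison f ≫ Abelian.image.ι f := by
    rw [← cancel_epi (Abelian.coimage.π f), Abelian.coimage.fac]
    simp
  rw [h]
  exact mono_comp _ _

/-- If `k` is (weakly) the kernel of `f`, then the induced map `coker k ⟶ Y` is mono. -/
theorem mono_cokernelDesc {C : Type*} [Category C] [Abelian C] {K X Y : C}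
    (k : K ⟶ X) (f : X ⟶ Y) (w : k ≫ f = 0) [Mono k]
    (hk : ∀ ⦃T : C⦄ (t : T ⟶ X), t ≫ f = 0 → ∃ s : T ⟶ K, s ≫ k = t) :
    Mono (cokernel.desc k f w) := by
  obtain ⟨s, hs⟩ := hk (kernel.ι f) (kernel.condition f)
  have hk' : k = kernel.lift f k w ≫ kernel.ι f := (kernel.lift_ι f k w).symm
  have hkπ : k ≫ cokernel.π (kernel.ι f) = 0 := by
    rw [hk', Category.assoc, cokernel.condition, comp_zero]
  have hιπ : kernel.ι f ≫ cokernel.π k = 0 := by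
    rw [← hs, Category.assoc, cokernel.condition, comp_zero]
  have hd : cokernel.desc k f w =
      cokernel.desc k (cokernel.π (kernel.ι f)) hkπ ≫ Abelian.factorThruCoimage f := by
    rw [← cancel_epi (cokernel.π k)]
    simp [Abelian.coimage.fac]
  haveI hiso : IsIso (cokernel.desc k (cokernel.π (kernel.ι f)) hkπ) := by
    refine ⟨cokernel.desc (kernel.ι f) (cokernel.π k) hιπ, ?_, ?_⟩
    · rw [← cancel_epi (cokernel.π k)]; simp
    · rw [← cancel_epi (cokernel.π (kernel.ι f))]; simp
  haveI := mono_factorThruCoimage' f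
  rw [hd]
  exact mono_comp _ _

/-- The canonical isomorphism `X ⊗ₘ X^{⊗(k+1)} ≅ X^{⊗(k+2)}`. -/
noncomputable def tshift (X : M) : (k : ℕ) → (X ⊗ tpow X (k + 1) ≅ tpow X (k + 2))
  | 0 => Iso.refl (X ⊗ X)
  | (k + 1) => (α_ X (tpow X (k + 1)) X).symm ≪≫ tensorIso (tshift X k) (Iso.refl X)

theorem tshift_natural {X Y : M} (f : X ⟶ Y) : ∀ k : ℕ,
    (f ⊗ₘ tpowHom f (k + 1)) ≫ (tshift Y k).hom = (tshift X k).hom ≫ tpowHom f (k + 2)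
  | 0 => by
    show (f ⊗ₘ f) ≫ 𝟙 (Y ⊗ Y) = 𝟙 (X ⊗ X) ≫ (f ⊗ₘ f)
    simp
  | (k + 1) => by
    have IH := tshift_natural f k
    show (f ⊗ₘ (tpowHom f (k + 1) ⊗ₘ f)) ≫ (α_ Y (tpow Y (k + 1)) Y).inv ≫
        ((tshift Y k).hom ⊗ₘ 𝟙 Y) =
      ((α_ X (tpow X (k + 1)) X).inv ≫ ((tshift X k).hom ⊗ₘ 𝟙 X)) ≫ (tpowHom f (k + 2) ⊗ₘ f)
    calc (f ⊗ₘ (tpowHom f (k + 1) ⊗ₘ f)) ≫ (α_ Y (tpow Y (k + 1)) Y).inv ≫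
            ((tshift Y k).hom ⊗ₘ 𝟙 Y)
        = (α_ X (tpow X (k + 1)) X).inv ≫ ((f ⊗ₘ tpowHom f (k + 1)) ⊗ₘ f) ≫
            ((tshift Y k).hom ⊗ₘ 𝟙 Y) := by
          rw [associator_inv_naturality_assoc]
      _ = (α_ X (tpow X (k + 1)) X).inv ≫
            (((f ⊗ₘ tpowHom f (k + 1)) ≫ (tshift Y k).hom) ⊗ₘ (f ≫ 𝟙 Y)) := by
          rw [tensorHom_comp_tensorHom]
      _ = (α_ X (tpow X (k + 1)) X).inv ≫
            (((tshift X k).hom ≫ tpowHom f (k + 2)) ⊗ₘ (𝟙 X ≫ f)) := by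
          rw [IH, Category.comp_id, Category.id_comp]
      _ = ((α_ X (tpow X (k + 1)) X).inv ≫ ((tshift X k).hom ⊗ₘ 𝟙 X)) ≫
            (tpowHom f (k + 2) ⊗ₘ f) := by
          rw [← tensorHom_comp_tensorHom, Category.assoc]

theorem iterComul_succ' (E : Comon M) : ∀ k : ℕ,
    iterComul E (k + 1) = E.comon.comul ≫ (𝟙 E.X ⊗ₘ iterComul E k) ≫ (tshift E.X k).hom
  | 0 => by
    show iterComul E 1 = E.comon.comul ≫ (𝟙 E.X ⊗ₘ 𝟙 E.X) ≫ 𝟙 (E.X ⊗ E.X)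
    simp [iterComul]
    erw [id_tensorHom_id, Category.comp_id]
  | (k + 1) => by
    have IH := iterComul_succ' E k
    have hco : E.comon.comul ≫ (𝟙 E.X ⊗ₘ E.comon.comul) ≫ (α_ E.X E.X E.X).inv =
        E.comon.comul ≫ (E.comon.comul ⊗ₘ 𝟙 E.X) := by
      rw [id_tensorHom, tensorHom_id]
      simpa using (ComonObj.comul_assoc_flip E.X).symm
    symm
    show E.comon.comul ≫ (𝟙 E.X ⊗ₘ (E.comon.comul ≫ (iterComul E k ⊗ₘ 𝟙 E.X))) ≫
        ((α_ E.X (tpow E.X (k + 1)) E.X).inv ≫ ((tshift E.X k).hom ⊗ₘ 𝟙 E.X)) =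
      iterComul E (k + 2)
    calc E.comon.comul ≫ (𝟙 E.X ⊗ₘ (E.comon.comul ≫ (iterComul E k ⊗ₘ 𝟙 E.X))) ≫
            ((α_ E.X (tpow E.X (k + 1)) E.X).inv ≫ ((tshift E.X k).hom ⊗ₘ 𝟙 E.X))
        = E.comon.comul ≫ (𝟙 E.X ⊗ₘ E.comon.comul) ≫ (𝟙 E.X ⊗ₘ (iterComul E k ⊗ₘ 𝟙 E.X)) ≫
            (α_ E.X (tpow E.X (k + 1)) E.X).inv ≫ ((tshift E.X k).hom ⊗ₘ 𝟙 E.X) := by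
          rw [← Category.id_comp (𝟙 E.X), ← tensorHom_comp_tensorHom]
          simp only [Category.assoc, Category.id_comp]
      _ = E.comon.comul ≫ (𝟙 E.X ⊗ₘ E.comon.comul) ≫ (α_ E.X E.X E.X).inv ≫
            ((𝟙 E.X ⊗ₘ iterComul E k) ⊗ₘ 𝟙 E.X) ≫ ((tshift E.X k).hom ⊗ₘ 𝟙 E.X) := by
          rw [associator_inv_naturality_assoc]
      _ = E.comon.comul ≫ (E.comon.comul ⊗ₘ 𝟙 E.X) ≫
            ((𝟙 E.X ⊗ₘ iterComul E k) ⊗ₘ 𝟙 E.X) ≫ ((tshift E.X k).hom ⊗ₘ 𝟙 E.X) := by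
          rw [reassoc_of% hco]
      _ = E.comon.comul ≫ ((E.comon.comul ≫ (𝟙 E.X ⊗ₘ iterComul E k) ≫ (tshift E.X k).hom) ⊗ₘ
            (𝟙 E.X ≫ 𝟙 E.X ≫ 𝟙 E.X)) := by
          rw [tensorHom_comp_tensorHom, tensorHom_comp_tensorHom]
      _ = E.comon.comul ≫ (iterComul E (k + 1) ⊗ₘ 𝟙 E.X) := by
          rw [← IH]; simp
      _ = (show E.X ⟶ tpow E.X (k + 1 + 1) ⊗ E.X from iterComul E (k + 2)) := rfl

/-- The key factorisation `Δ^{m+1} ≫ p^{⊗(m+2)} = Δ ≫ (p ⊗ₘ (Δ^m ≫ p^{⊗(m+1)})) ≫ shuffle`. -/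
theorem keyFactor {D E : Comon M} (δ : D ⟶ E) (m : ℕ) :
    iterComul E (m + 1) ≫ tpowHom (cokernel.π δ.hom) (m + 2) =
      E.comon.comul ≫ (cokernel.π δ.hom ⊗ₘ (iterComul E m ≫ tpowHom (cokernel.π δ.hom) (m + 1))) ≫
        (tshift (cokernel δ.hom) m).hom := by
  rw [iterComul_succ']
  calc (E.comon.comul ≫ (𝟙 E.X ⊗ₘ iterComul E m) ≫ (tshift E.X m).hom) ≫
          tpowHom (cokernel.π δ.hom) (m + 2)
      = E.comon.comul ≫ (𝟙 E.X ⊗ₘ iterComul E m) ≫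
          ((tshift E.X m).hom ≫ tpowHom (cokernel.π δ.hom) (m + 2)) := by
        simp only [Category.assoc]
    _ = E.comon.comul ≫ (𝟙 E.X ⊗ₘ iterComul E m) ≫
          ((cokernel.π δ.hom ⊗ₘ tpowHom (cokernel.π δ.hom) (m + 1)) ≫
            (tshift (cokernel δ.hom) m).hom) := by
        rw [← tshift_natural]
    _ = E.comon.comul ≫ ((𝟙 E.X ≫ cokernel.π δ.hom) ⊗ₘ
          (iterComul E m ≫ tpowHom (cokernel.π δ.hom) (m + 1))) ≫
          (tshift (cokernel δ.hom) m).hom := by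
        rw [← tensorHom_comp_tensorHom]
        simp only [Category.assoc]
    _ = E.comon.comul ≫ (cokernel.π δ.hom ⊗ₘ
          (iterComul E m ≫ tpowHom (cokernel.π δ.hom) (m + 1))) ≫
          (tshift (cokernel δ.hom) m).hom := by
        rw [Category.id_comp]

/-- Degenerate case: if `jD` is epi, both sides are zero. -/
theorem aux_zero [∀ X : M, (tensorRight X).Additive]
    {A N B P : M} (jD : A ⟶ N) [Epi jD] (jB : A ⟶ B)
    (g : cokernel jB ⟶ cokernel jD) (c : P ⟶ N ⊗ N) :
    ∃! β : P ⟶ cokernel jD ⊗ cokernel jB,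
      β ≫ (𝟙 (cokernel jD) ⊗ₘ g) = c ≫ (cokernel.π jD ⊗ₘ cokernel.π jD) := by
  have zero_wR : ∀ {A' B' : M} (Y : M), (0 : A' ⟶ B') ▷ Y = 0 := by
    intro A' B' Y
    rw [← tensorRight_map]
    exact (tensorRight Y).map_zero _ _
  have hπ0 : cokernel.π jD = 0 := cokernel.π_of_epi jD
  have h0 : 𝟙 (cokernel jD) = 0 := by
    rw [← cancel_epi (cokernel.π jD), comp_zero, Category.comp_id, hπ0]
  have hππ : (cokernel.π jD ⊗ₘ cokernel.π jD) = 0 := by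
    rw [MonoidalCategory.tensorHom_def, hπ0, zero_wR, zero_comp]
  have hid : 𝟙 (cokernel jD ⊗ cokernel jB) = 0 := by
    rw [← id_tensorHom_id, MonoidalCategory.tensorHom_def, h0, zero_wR, zero_comp]
  refine ⟨0, ?_, ?_⟩
  · simp only [zero_comp, hππ, comp_zero]
  · intro y _
    rw [← Category.comp_id y, hid, comp_zero]

/-- The basic vanishing statement, coming from the definition of the wedge as a kernel. -/
theorem aux_van {D E : Comon M} (δ : D ⟶ E) (m : ℕ) :
    kernel.ι (iterComul E (m + 1) ≫ tpowHom (cokernel.π δ.hom) (m + 2)) ≫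
      (E.comon.comul ≫ (cokernel.π δ.hom ⊗ₘ
        (iterComul E m ≫ tpowHom (cokernel.π δ.hom) (m + 1)))) = 0 := by
  have hcf : E.comon.comul ≫ (cokernel.π δ.hom ⊗ₘ
      (iterComul E m ≫ tpowHom (cokernel.π δ.hom) (m + 1))) =
      (iterComul E (m + 1) ≫ tpowHom (cokernel.π δ.hom) (m + 2)) ≫
        (tshift (cokernel δ.hom) m).inv := by
    rw [keyFactor δ m]
    simp only [Category.assoc, Iso.hom_inv_id, Category.comp_id]
  rw [hcf, ← Category.assoc, kernel.condition, zero_comp]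

/-- The main abstract construction of `β`. -/
theorem aux_succ
    [∀ X : M, (tensorLeft X).Additive] [∀ X : M, (tensorRight X).Additive]
    [∀ X : M, PreservesFiniteLimits (tensorLeft X)]
    [∀ X : M, PreservesFiniteLimits (tensorRight X)]
    {DX N1 N2 EX L T2 : M}
    (ι1 : N1 ⟶ EX) (ι2 : N2 ⟶ EX) [Mono ι1] [Mono ι2]
    (dl : DX ⟶ EX) [Mono dl]
    (pE : EX ⟶ L)
    (liftδ : ∀ ⦃T : M⦄ (t : T ⟶ EX), t ≫ pE = 0 → ∃ s : T ⟶ DX, s ≫ dl = t)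
    (hdlp : dl ≫ pE = 0)
    (fn : EX ⟶ T2)
    (hcond1 : ι1 ≫ fn = 0)
    (liftfn : ∀ ⦃T : M⦄ (t : T ⟶ EX), t ≫ fn = 0 → ∃ s : T ⟶ N1, s ≫ ι1 = t)
    (Δ : EX ⟶ EX ⊗ EX)
    (hvan : ι2 ≫ (Δ ≫ (pE ⊗ₘ fn)) = 0)
    (ξ : N1 ⟶ N2) [Mono ξ] (hξ : ξ ≫ ι2 = ι1)
    (j1 : DX ⟶ N1) [Mono j1] (hj1 : j1 ≫ ι1 = dl)
    (jD : DX ⟶ N2) [Mono jD] (hjD : jD ≫ ι2 = dl)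
    (comulN : N2 ⟶ N2 ⊗ N2) (hcomulN : comulN ≫ (ι2 ⊗ₘ ι2) = ι2 ≫ Δ)
    (Q : cokernel j1 ⟶ cokernel jD) (hQ : cokernel.π j1 ≫ Q = ξ ≫ cokernel.π jD) :
    ∃! β : N2 ⟶ cokernel jD ⊗ cokernel j1,
      β ≫ (𝟙 (cokernel jD) ⊗ₘ Q) = comulN ≫ (cokernel.π jD ⊗ₘ cokernel.π jD) := by
  -- the monomorphism `u : coker jD ⟶ L`
  have wu : jD ≫ (ι2 ≫ pE) = 0 := by
    rw [← Category.assoc, hjD, hdlp]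
  have hku : ∀ ⦃T : M⦄ (t : T ⟶ N2), t ≫ (ι2 ≫ pE) = 0 → ∃ s, s ≫ jD = t := by
    intro T t ht
    rw [← Category.assoc] at ht
    obtain ⟨s, hs⟩ := liftδ (t ≫ ι2) ht
    refine ⟨s, ?_⟩
    rw [← cancel_mono ι2, Category.assoc, hjD, hs]
  have humono : Mono (cokernel.desc jD (ι2 ≫ pE) wu) := mono_cokernelDesc _ _ _ hku
  -- the monomorphism `u1 : coker j1 ⟶ L`
  have wu1 : j1 ≫ (ι1 ≫ pE) = 0 := by
    rw [← Category.assoc, hj1, hdlp]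
  have hku1 : ∀ ⦃T : M⦄ (t : T ⟶ N1), t ≫ (ι1 ≫ pE) = 0 → ∃ s, s ≫ j1 = t := by
    intro T t ht
    rw [← Category.assoc] at ht
    obtain ⟨s, hs⟩ := liftδ (t ≫ ι1) ht
    refine ⟨s, ?_⟩
    rw [← cancel_mono ι1, Category.assoc, hj1, hs]
  have hu1mono : Mono (cokernel.desc j1 (ι1 ≫ pE) wu1) := mono_cokernelDesc _ _ _ hku1
  -- the monomorphism `v : coker ξ ⟶ T2`
  have wv : ξ ≫ (ι2 ≫ fn) = 0 := by
    rw [← Category.assoc, hξ, hcond1]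
  have hkv : ∀ ⦃T : M⦄ (t : T ⟶ N2), t ≫ (ι2 ≫ fn) = 0 → ∃ s, s ≫ ξ = t := by
    intro T t ht
    rw [← Category.assoc] at ht
    obtain ⟨s, hs⟩ := liftfn (t ≫ ι2) ht
    refine ⟨s, ?_⟩
    rw [← cancel_mono ι2, Category.assoc, hξ, hs]
  have hvmono : Mono (cokernel.desc ξ (ι2 ≫ fn) wv) := mono_cokernelDesc _ _ _ hkv
  set u := cokernel.desc jD (ι2 ≫ pE) wu with hu
  have hπu : cokernel.π jD ≫ u = ι2 ≫ pE := cokernel.π_desc _ _ _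
  clear_value u
  set u1 := cokernel.desc j1 (ι1 ≫ pE) wu1 with hu1
  have hπu1 : cokernel.π j1 ≫ u1 = ι1 ≫ pE := cokernel.π_desc _ _ _
  clear_value u1
  set v := cokernel.desc ξ (ι2 ≫ fn) wv with hv
  have hπv : cokernel.π ξ ≫ v = ι2 ≫ fn := cokernel.π_desc _ _ _
  clear_value v
  -- `Q` is a monomorphism
  have hqu : Q ≫ u = u1 := by
    rw [← cancel_epi (cokernel.π j1), ← Category.assoc, hQ, Category.assoc, hπu, hπu1,
      ← Category.assoc, hξ]
  haveI hqmono : Mono Q := by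
    haveI : Mono u := humono
    haveI h : Mono (Q ≫ u) := by rw [hqu]; exact hu1mono
    exact mono_of_mono Q u
  -- the key vanishing statement
  haveI hmuv : Mono (u ⊗ₘ v) := by
    haveI : Mono u := humono
    haveI : Mono v := hvmono
    haveI h1 : Mono (u ▷ cokernel ξ) := by
      rw [← tensorRight_map]; exact (tensorRight _).map_mono u
    haveI h2 : Mono (L ◁ v) := by
      rw [← tensorLeft_map]; exact (tensorLeft _).map_mono v
    rw [MonoidalCategory.tensorHom_def]
    exact mono_comp _ _
  have key : comulN ≫ (cokernel.π jD ⊗ₘ cokernel.π ξ) = 0 := by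
    rw [← cancel_mono (u ⊗ₘ v), zero_comp, Category.assoc, tensorHom_comp_tensorHom, hπu, hπv,
      ← tensorHom_comp_tensorHom, ← Category.assoc, hcomulN, Category.assoc, hvan]
  -- construction of `β`
  have hw0 : ξ ≫ (cokernel.π jD ≫ cokernel.π Q) = 0 := by
    rw [← Category.assoc, ← hQ, Category.assoc, cokernel.condition, comp_zero]
  set w := cokernel.desc ξ (cokernel.π jD ≫ cokernel.π Q) hw0 with hww
  have hπw : cokernel.π ξ ≫ w = cokernel.π jD ≫ cokernel.π Q := cokernel.π_desc _ _ _
  clear_value w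
  clear hww
  have hg : (comulN ≫ (cokernel.π jD ⊗ₘ cokernel.π jD)) ≫
      ((tensorLeft (cokernel jD)).map (cokernel.π Q)) = 0 := by
    rw [tensorLeft_map, ← id_tensorHom]
    calc (comulN ≫ (cokernel.π jD ⊗ₘ cokernel.π jD)) ≫ (𝟙 (cokernel jD) ⊗ₘ cokernel.π Q)
        = comulN ≫ ((cokernel.π jD ≫ 𝟙 (cokernel jD)) ⊗ₘ (cokernel.π jD ≫ cokernel.π Q)) := by
          rw [Category.assoc, tensorHom_comp_tensorHom]
      _ = comulN ≫ ((cokernel.π jD ≫ 𝟙 (cokernel jD)) ⊗ₘ (cokernel.π ξ ≫ w)) := by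
          rw [hπw]
      _ = comulN ≫ ((cokernel.π jD ⊗ₘ cokernel.π ξ) ≫ (𝟙 (cokernel jD) ⊗ₘ w)) := by
          rw [← tensorHom_comp_tensorHom]
      _ = (comulN ≫ (cokernel.π jD ⊗ₘ cokernel.π ξ)) ≫ (𝟙 (cokernel jD) ⊗ₘ w) := by
          rw [Category.assoc]
      _ = 0 := by rw [key, zero_comp]
  have hqlim := Abelian.monoIsKernelOfCokernel
    (CokernelCofork.ofπ (cokernel.π Q) (cokernel.condition Q)) (cokernelIsCokernel Q)
  have hqlim2 := isLimitForkMapOfIsLimit' (tensorLeft (cokernel jD)) _ hqlim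
  obtain ⟨β, hβ⟩ := KernelFork.IsLimit.lift' hqlim2
    (comulN ≫ (cokernel.π jD ⊗ₘ cokernel.π jD)) hg
  have hβ' : β ≫ ((tensorLeft (cokernel jD)).map Q) =
      comulN ≫ (cokernel.π jD ⊗ₘ cokernel.π jD) := hβ
  haveI hmq : Mono ((tensorLeft (cokernel jD)).map Q) := (tensorLeft _).map_mono Q
  have hid' : (𝟙 (cokernel jD) ⊗ₘ Q) = (tensorLeft (cokernel jD)).map Q := by
    rw [tensorLeft_map, id_tensorHom]
  refine ⟨β, ?_, ?_⟩
  · show β ≫ (𝟙 (cokernel jD) ⊗ₘ Q) = comulN ≫ (cokernel.π jD ⊗ₘ cokernel.π jD)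
    rw [hid']
    exact hβ'
  · intro y hy
    have hy' : y ≫ (𝟙 (cokernel jD) ⊗ₘ Q) =
        comulN ≫ (cokernel.π jD ⊗ₘ cokernel.π jD) := hy
    rw [hid'] at hy'
    rw [← cancel_mono ((tensorLeft (cokernel jD)).map Q), hβ', hy']

end Aux

/-- Let `δ : D ⟶ E` be a monomorphism of coalgebras in a coabelian monoidal
category `M` and write `D^n := D^{∧_E^n}`.  For every `n ∈ ℕ` there is a unique morphism
`β_n : D^{n+1} ⟶ (D^{n+1}/D) ⊗ (D^n/D)` with `((D^{n+1}/D) ⊗ (ξ_n^{n+1}/D)) ∘ β_n = α_D^{D^{n+1}}`.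
Here `ξ_n^{n+1} : D^n ⟶ D^{n+1}` and the inclusions `ξ_1^n : D ⟶ D^n`, `ξ_1^{n+1} : D ⟶ D^{n+1}`
are the canonical morphisms (characterised by compatibility with the `δ_k`), the quotients
`D^n/D`, `D^{n+1}/D` are the corresponding cokernels, `ξ_n^{n+1}/D` is the induced morphism on
quotients, and `α_D^{D^{n+1}} = (p_D ⊗ p_D) ∘ Δ_{D^{n+1}}` where the comultiplication
`Δ_{D^{n+1}}` is the (unique) one making `δ_{n+1}` a coalgebra homomorphism. -/
theorem beta_exists_unique
    {M : Type u} [Category.{v} M] [MonoidalCategory M] [Abelian M]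
    [∀ X : M, (tensorLeft X).Additive] [∀ X : M, (tensorRight X).Additive]
    [∀ X : M, PreservesFiniteLimits (tensorLeft X)]
    [∀ X : M, PreservesFiniteLimits (tensorRight X)]
    {D E : Comon M} (δ : D ⟶ E) [Mono δ.hom] (n : ℕ)
    -- `ξ = ξ_n^{n+1} : D^n ⟶ D^{n+1}`
    (ξ : wedgePow δ n ⟶ wedgePow δ (n + 1))
    (hξ : ξ ≫ wedgePowι δ (n + 1) = wedgePowι δ n)
    -- `j1 = ξ_1^n : D ⟶ D^n`, realising `D` as a subobject of `D^n`
    (j1 : D.X ⟶ wedgePow δ n) (hj1 : j1 ≫ wedgePowι δ n = δ.hom) [Mono j1]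
    -- `jD = ξ_1^{n+1} : D ⟶ D^{n+1}`, realising `D` as a subobject of `D^{n+1}`
    (jD : D.X ⟶ wedgePow δ (n + 1)) (hjD : jD ≫ wedgePowι δ (n + 1) = δ.hom) [Mono jD]
    -- the coalgebra structure of `D^{n+1}`
    (comulN : wedgePow δ (n + 1) ⟶ wedgePow δ (n + 1) ⊗ wedgePow δ (n + 1))
    (hcomulN : comulN ≫ (wedgePowι δ (n + 1) ⊗ₘ wedgePowι δ (n + 1)) =
      wedgePowι δ (n + 1) ≫ E.comon.comul) :
    ∃! β : wedgePow δ (n + 1) ⟶ cokernel jD ⊗ cokernel j1,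
      β ≫ (𝟙 (cokernel jD) ⊗ₘ
          cokernel.map j1 jD (𝟙 D.X) ξ
            (by rw [← cancel_mono (wedgePowι δ (n + 1))]
                simp [Category.assoc, hξ, hj1, hjD])) =
        comulN ≫ (cokernel.π jD ⊗ₘ cokernel.π jD) := by
  have hker := Abelian.monoIsKernelOfCokernel
    (CokernelCofork.ofπ (cokernel.π δ.hom) (cokernel.condition δ.hom))
    (cokernelIsCokernel δ.hom)
  have liftδ : ∀ ⦃T : M⦄ (t : T ⟶ E.X), t ≫ cokernel.π δ.hom = 0 →
      ∃ s : T ⟶ D.X, s ≫ δ.hom = t := by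
    intro T t ht
    obtain ⟨s, hs⟩ := KernelFork.IsLimit.lift' hker t ht
    exact ⟨s, hs⟩
  obtain _ | m := n
  · -- the case `n = 0` : here `jD` is an isomorphism, so everything is zero
    have hι : wedgePowι δ 1 ≫ cokernel.π δ.hom = 0 := by
      have h := kernel.condition (iterComul E 0 ≫ tpowHom (cokernel.π δ.hom) 1)
      have e : iterComul E 0 ≫ tpowHom (cokernel.π δ.hom) 1 = cokernel.π δ.hom :=
        Category.id_comp _
      have h' : wedgePowι δ 1 ≫ (iterComul E 0 ≫ tpowHom (cokernel.π δ.hom) 1) = 0 := h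
      rw [e] at h'
      exact h'
    obtain ⟨s, hs'⟩ := liftδ (wedgePowι δ 1) hι
    have h1 : jD ≫ s = 𝟙 D.X := by
      rw [← cancel_mono δ.hom, Category.assoc, hs', Category.id_comp]
      exact hjD
    have h2 : s ≫ jD = 𝟙 (wedgePow δ 1) := by
      rw [← cancel_mono (wedgePowι δ 1), Category.assoc, hjD, Category.id_comp]
      exact hs'
    haveI : IsIso jD := ⟨s, h1, h2⟩
    exact aux_zero jD j1 _ comulN
  · -- the case `n = m + 1`
    haveI : Mono ξ := by
      haveI h : Mono (ξ ≫ wedgePowι δ (m + 1 + 1)) := by rw [hξ]; infer_instance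
      exact mono_of_mono ξ (wedgePowι δ (m + 1 + 1))
    have hvan : wedgePowι δ (m + 1 + 1) ≫
        (E.comon.comul ≫ (cokernel.π δ.hom ⊗ₘ
          (iterComul E m ≫ tpowHom (cokernel.π δ.hom) (m + 1)))) = 0 := aux_van δ m
    have hcond1 : wedgePowι δ (m + 1) ≫
        (iterComul E m ≫ tpowHom (cokernel.π δ.hom) (m + 1)) = 0 := kernel.condition _
    have liftfn : ∀ ⦃T : M⦄ (t : T ⟶ E.X),
        t ≫ (iterComul E m ≫ tpowHom (cokernel.π δ.hom) (m + 1)) = 0 →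
        ∃ s : T ⟶ wedgePow δ (m + 1), s ≫ wedgePowι δ (m + 1) = t := by
      intro T t ht
      exact ⟨kernel.lift _ t ht, kernel.lift_ι _ _ _⟩
    exact aux_succ (wedgePowι δ (m + 1)) (wedgePowι δ (m + 1 + 1)) δ.hom
      (cokernel.π δ.hom) liftδ (cokernel.condition δ.hom)
      (iterComul E m ≫ tpowHom (cokernel.π δ.hom) (m + 1)) hcond1 liftfn
      E.comon.comul hvan ξ hξ j1 hj1 jD hjD comulN hcomulN _ (cokernel.π_desc _ _ _)
end
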